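/- arXiv:1202.0946 — 8 statements merged into one kernel-verified Lean document; each statement's English description precedes it below -/
import Mathlib

section
/- Let n ≥ 1, let ε ∈ ℝⁿ, Γ, Σ ∈ S_n, let T : S_n → ℝⁿ be a linear map with adjoint T† : ℝⁿ → S_n (i.e. β·T(R) = ⟨T†(β), R⟩ for all β, R), let Ψ : S_n → S_n be a self-adjoint linear operator, and let c ∈ ℝ. Define Q(α, β, R) := c − 2 εᵀβ − ⟨Γ, R⟩ + α² + α⟨Σ, R⟩ + βᵀΣβ + βᵀT(R) + ⟨R, Ψ(R)⟩/4 on ℝ × ℝⁿ × S_n. Suppose Σ is positive definite and the self-adjoint operator G := Ψ − Σ⟨Σ, ·⟩ − T† ∘ Σ⁻¹ ∘ T on S_n is positive definite. Then Q has a unique global minimizer (α⋄, β⋄, R⋄), given by R⋄ = 2 G⁻¹(Γ − T†(Σ⁻¹ε)), β⋄ = Σ⁻¹(ε − T(R⋄)/2) and α⋄ = −⟨Σ, R⋄⟩/2. -/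
/-!
Completing the square in `α`, then in `β` (using `Σ ≻ 0`), writes `Q` as
`(α + ⟨Σ, R⟩/2)² + ‖β − Σ⁻¹(ε − T R/2)‖²_Σ + ⟨R, G R⟩/4 − ⟨Γ − T†Σ⁻¹ε, R⟩ + const`.
Being positive definite on `S_n`, `G` is injective and hence invertible there; completing the
square once more around the solution `R⋄` of `G R⋄ = 2(Γ − T†Σ⁻¹ε)` writes `Q` as its minimum
plus three nonnegative terms, which vanish exactly at `(α⋄, β⋄, R⋄)`.
-/

open Matrix

namespace Matrix

variable {ι R : Type*} [Fintype ι]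

def symmetricSubmodule (R ι : Type*) [CommSemiring R] : Submodule R (Matrix ι ι R) where
  carrier := {A | A.IsSymm}
  add_mem' := IsSymm.add
  zero_mem' := isSymm_zero
  smul_mem' c _ hA := hA.smul c

theorem IsSymm.dotProduct_mulVec_comm [CommSemiring R] {A : Matrix ι ι R} (hA : A.IsSymm)
    (v w : ι → R) : v ⬝ᵥ A *ᵥ w = w ⬝ᵥ A *ᵥ v := by
  rw [dotProduct_mulVec, ← mulVec_transpose, hA, dotProduct_comm]

theorem IsSymm.dotProduct_mulVec_sub_two_mul_dotProduct [CommRing R] [DecidableEq ι]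
    {A : Matrix ι ι R} (hA : A.IsSymm) (hdet : IsUnit A.det) (u v : ι → R) :
    v ⬝ᵥ A *ᵥ v - 2 * (u ⬝ᵥ v)
      = (v - A⁻¹ *ᵥ u) ⬝ᵥ A *ᵥ (v - A⁻¹ *ᵥ u) - u ⬝ᵥ A⁻¹ *ᵥ u := by
  have hAu : A *ᵥ (A⁻¹ *ᵥ u) = u := by
    rw [mulVec_mulVec, mul_nonsing_inv A hdet, one_mulVec]
  rw [mulVec_sub, hAu, sub_dotProduct, dotProduct_sub, dotProduct_sub,
    hA.dotProduct_mulVec_comm (A⁻¹ *ᵥ u) v, hAu, dotProduct_comm (A⁻¹ *ᵥ u) u,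
    dotProduct_comm v u]
  ring

theorem PosDef.dotProduct_mulVec_self_eq_zero_iff {A : Matrix ι ι ℝ} (hA : A.PosDef)
    {v : ι → ℝ} : v ⬝ᵥ A *ᵥ v = 0 ↔ v = 0 := by
  refine ⟨fun h => by_contra fun hv => ?_, fun h => by simp [h]⟩
  simpa [h] using hA.dotProduct_mulVec_pos hv

theorem PosDef.dotProduct_mulVec_self_nonneg {A : Matrix ι ι ℝ} (hA : A.PosDef) (v : ι → ℝ) :
    0 ≤ v ⬝ᵥ A *ᵥ v := by
  simpa using hA.posSemidef.dotProduct_mulVec_nonneg v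

theorem exists_isSymm_apply_eq [Field R] {L : Matrix ι ι R →ₗ[R] Matrix ι ι R}
    (hL : ∀ X, X.IsSymm → (L X).IsSymm) (hker : ∀ X, X.IsSymm → L X = 0 → X = 0)
    {D : Matrix ι ι R} (hD : D.IsSymm) : ∃ X, X.IsSymm ∧ L X = D := by
  have hinj : Set.InjOn L (symmetricSubmodule R ι) := fun X hX Y hY hXY =>
    sub_eq_zero.mp <| hker _ (IsSymm.sub hX hY) (by rw [map_sub, hXY, sub_self])
  exact (LinearMap.injOn_iff_surjOn (p := symmetricSubmodule R ι) hL).mp hinj hD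

theorem trace_sub_mul_apply_sub [CommRing R] {L : Matrix ι ι R →ₗ[R] Matrix ι ι R}
    {X Y : Matrix ι ι R} (hXY : (X * L Y).trace = (Y * L X).trace) :
    ((X - Y) * L (X - Y)).trace
      = (X * L X).trace - 2 * (X * L Y).trace + (Y * L Y).trace := by
  rw [map_sub, sub_mul, mul_sub, mul_sub, trace_sub, trace_sub, trace_sub, ← hXY]
  ring

end Matrix

noncomputable section

variable {ι : Type*} [Fintype ι] [DecidableEq ι]
  (c : ℝ) (ε : ι → ℝ) (Γ Sgm : Matrix ι ι ℝ) (T : Matrix ι ι ℝ →ₗ[ℝ] ι → ℝ)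
  (Tdag : (ι → ℝ) →ₗ[ℝ] Matrix ι ι ℝ) (Ψ : Matrix ι ι ℝ →ₗ[ℝ] Matrix ι ι ℝ)

def quadraticCost (α : ℝ) (β : ι → ℝ) (R : Matrix ι ι ℝ) : ℝ :=
  c - 2 * (ε ⬝ᵥ β) - (Γ * R).trace + α ^ 2 + α * (Sgm * R).trace + β ⬝ᵥ (Sgm *ᵥ β)
    + β ⬝ᵥ T R + (R * Ψ R).trace / 4

/-- Minimizing `quadraticCost` over `α` and `β` leaves `⟨R, reducedHessian R⟩ / 4` as the
quadratic part in `R`. -/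
def reducedHessian : Matrix ι ι ℝ →ₗ[ℝ] Matrix ι ι ℝ where
  toFun R := Ψ R - (Sgm * R).trace • Sgm - Tdag (Sgm⁻¹ *ᵥ T R)
  map_add' X Y := by
    simp only [map_add, mul_add, trace_add, add_smul, mulVec_add]
    abel
  map_smul' a X := by
    simp only [map_smul, Matrix.mul_smul, trace_smul, mulVec_smul, smul_sub, smul_smul,
      smul_eq_mul, RingHom.id_apply]

def partialMinimizer (R : Matrix ι ι ℝ) : ℝ × (ι → ℝ) × Matrix ι ι ℝ :=
  (-(Sgm * R).trace / 2, Sgm⁻¹ *ᵥ (ε - (1 / 2 : ℝ) • T R), R)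

variable {Sgm T Tdag Ψ}

theorem isSymm_reducedHessian (hSgm : Sgm.IsSymm) (hTdag : ∀ v, (Tdag v).IsSymm)
    (hΨ : ∀ R, R.IsSymm → (Ψ R).IsSymm) {R : Matrix ι ι ℝ} (hR : R.IsSymm) :
    (reducedHessian Sgm T Tdag Ψ R).IsSymm :=
  ((hΨ R hR).sub (hSgm.smul _)).sub (hTdag _)

theorem trace_mul_reducedHessian
    (hT : ∀ v R, R.IsSymm → v ⬝ᵥ T R = (Tdag v * R).trace) {X : Matrix ι ι ℝ} (hX : X.IsSymm)
    (Y : Matrix ι ι ℝ) :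
    (X * reducedHessian Sgm T Tdag Ψ Y).trace
      = (X * Ψ Y).trace - (Sgm * X).trace * (Sgm * Y).trace - T X ⬝ᵥ Sgm⁻¹ *ᵥ T Y := by
  simp only [reducedHessian, LinearMap.coe_mk, AddHom.coe_mk, mul_sub, Matrix.mul_smul,
    trace_sub, trace_smul, smul_eq_mul]
  rw [trace_mul_comm X (Tdag _), ← hT _ X hX, trace_mul_comm X Sgm, dotProduct_comm]
  ring

theorem trace_mul_reducedHessian_comm (hSgm : Sgm.IsSymm)
    (hT : ∀ v R, R.IsSymm → v ⬝ᵥ T R = (Tdag v * R).trace)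
    (hΨ : ∀ X Y, X.IsSymm → Y.IsSymm → (X * Ψ Y).trace = (Ψ X * Y).trace)
    {X Y : Matrix ι ι ℝ} (hX : X.IsSymm) (hY : Y.IsSymm) :
    (X * reducedHessian Sgm T Tdag Ψ Y).trace = (Y * reducedHessian Sgm T Tdag Ψ X).trace := by
  rw [trace_mul_reducedHessian hT hX, trace_mul_reducedHessian hT hY, hΨ X Y hX hY,
    trace_mul_comm (Ψ X), hSgm.inv.dotProduct_mulVec_comm, mul_comm]

theorem quadraticCost_eq_add_sq (hSgm : Sgm.IsSymm) (hdet : IsUnit Sgm.det)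
    (hT : ∀ v R, R.IsSymm → v ⬝ᵥ T R = (Tdag v * R).trace)
    (hΨ : ∀ X Y, X.IsSymm → Y.IsSymm → (X * Ψ Y).trace = (Ψ X * Y).trace)
    {R₀ : Matrix ι ι ℝ} (hR₀ : R₀.IsSymm)
    (hGR₀ : reducedHessian Sgm T Tdag Ψ R₀ = (2 : ℝ) • (Γ - Tdag (Sgm⁻¹ *ᵥ ε)))
    (α : ℝ) (β : ι → ℝ) {R : Matrix ι ι ℝ} (hR : R.IsSymm) :
    quadraticCost c ε Γ Sgm T Ψ α β R
      = c - ε ⬝ᵥ Sgm⁻¹ *ᵥ ε - ((Γ - Tdag (Sgm⁻¹ *ᵥ ε)) * R₀).trace / 2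
        + (α + (Sgm * R).trace / 2) ^ 2
        + (β - Sgm⁻¹ *ᵥ (ε - (1 / 2 : ℝ) • T R)) ⬝ᵥ
            Sgm *ᵥ (β - Sgm⁻¹ *ᵥ (ε - (1 / 2 : ℝ) • T R))
        + ((R - R₀) * reducedHessian Sgm T Tdag Ψ (R - R₀)).trace / 4 := by
  set G := reducedHessian Sgm T Tdag Ψ
  set D := Γ - Tdag (Sgm⁻¹ *ᵥ ε)
  have hβ := hSgm.dotProduct_mulVec_sub_two_mul_dotProduct hdet (ε - (1 / 2 : ℝ) • T R) β
  have hu : (ε - (1 / 2 : ℝ) • T R) ⬝ᵥ β = ε ⬝ᵥ β - β ⬝ᵥ T R / 2 := by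
    rw [sub_dotProduct, smul_dotProduct, dotProduct_comm (T R), smul_eq_mul]
    ring
  have huu : (ε - (1 / 2 : ℝ) • T R) ⬝ᵥ Sgm⁻¹ *ᵥ (ε - (1 / 2 : ℝ) • T R)
      = ε ⬝ᵥ Sgm⁻¹ *ᵥ ε - ε ⬝ᵥ Sgm⁻¹ *ᵥ T R + T R ⬝ᵥ Sgm⁻¹ *ᵥ T R / 4 := by
    simp only [mulVec_sub, mulVec_smul, sub_dotProduct, dotProduct_sub, smul_dotProduct,
      dotProduct_smul, smul_eq_mul]
    rw [hSgm.inv.dotProduct_mulVec_comm (T R) ε]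
    ring
  have hDR : (D * R).trace = (Γ * R).trace - ε ⬝ᵥ Sgm⁻¹ *ᵥ T R := by
    rw [sub_mul, trace_sub, ← hT _ R hR, hSgm.inv.dotProduct_mulVec_comm, dotProduct_comm]
  have hRGR := trace_mul_reducedHessian (Sgm := Sgm) (Ψ := Ψ) hT hR R
  have hshift := trace_sub_mul_apply_sub (L := G)
    (trace_mul_reducedHessian_comm hSgm hT hΨ hR hR₀)
  have hRGR₀ : (R * G R₀).trace = 2 * (D * R).trace := by
    rw [hGR₀, Matrix.mul_smul, trace_smul, trace_mul_comm, smul_eq_mul]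
  have hR₀GR₀ : (R₀ * G R₀).trace = 2 * (D * R₀).trace := by
    rw [hGR₀, Matrix.mul_smul, trace_smul, trace_mul_comm, smul_eq_mul]
  rw [quadraticCost]
  linear_combination hβ + 2 * hu - huu + hDR - (1 / 4 : ℝ) * hRGR
    - (1 / 4 : ℝ) * hshift + (1 / 2 : ℝ) * hRGR₀ - (1 / 4 : ℝ) * hR₀GR₀

theorem isMinOn_quadraticCost_iff (hSgm : Sgm.PosDef)
    (hT : ∀ v R, R.IsSymm → v ⬝ᵥ T R = (Tdag v * R).trace)
    (hΨ : ∀ X Y, X.IsSymm → Y.IsSymm → (X * Ψ Y).trace = (Ψ X * Y).trace)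
    (hG : ∀ R, R.IsSymm → R ≠ 0 → 0 < (R * reducedHessian Sgm T Tdag Ψ R).trace)
    {R₀ : Matrix ι ι ℝ} (hR₀ : R₀.IsSymm)
    (hGR₀ : reducedHessian Sgm T Tdag Ψ R₀ = (2 : ℝ) • (Γ - Tdag (Sgm⁻¹ *ᵥ ε)))
    {p : ℝ × (ι → ℝ) × Matrix ι ι ℝ} (hp : p.2.2.IsSymm) :
    IsMinOn (fun q => quadraticCost c ε Γ Sgm T Ψ q.1 q.2.1 q.2.2) {q | q.2.2.IsSymm} p
      ↔ p = partialMinimizer ε Sgm T R₀ := by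
  have hSgm_symm : Sgm.IsSymm := isHermitian_iff_isSymm.mp hSgm.isHermitian
  have hdet : IsUnit Sgm.det := (isUnit_iff_isUnit_det Sgm).mp hSgm.isUnit
  have key := quadraticCost_eq_add_sq c ε Γ hSgm_symm hdet hT hΨ hR₀ hGR₀
  have hG_nonneg : ∀ R, R.IsSymm →
      0 ≤ ((R - R₀) * reducedHessian Sgm T Tdag Ψ (R - R₀)).trace := fun R hR => by
    rcases eq_or_ne (R - R₀) 0 with h | h
    · simp [h]
    · exact (hG _ (hR.sub hR₀) h).le
  set K := c - ε ⬝ᵥ Sgm⁻¹ *ᵥ ε - ((Γ - Tdag (Sgm⁻¹ *ᵥ ε)) * R₀).trace / 2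
  have hK : quadraticCost c ε Γ Sgm T Ψ (-(Sgm * R₀).trace / 2)
      (Sgm⁻¹ *ᵥ (ε - (1 / 2 : ℝ) • T R₀)) R₀ = K := by
    rw [key _ _ hR₀, neg_div, neg_add_cancel]
    simp
  have hK_le : ∀ q : ℝ × (ι → ℝ) × Matrix ι ι ℝ, q.2.2.IsSymm →
      K ≤ quadraticCost c ε Γ Sgm T Ψ q.1 q.2.1 q.2.2 := fun q hq => by
    rw [key _ _ hq]
    linarith [sq_nonneg (q.1 + (Sgm * q.2.2).trace / 2), hG_nonneg _ hq,
      hSgm.dotProduct_mulVec_self_nonneg (q.2.1 - Sgm⁻¹ *ᵥ (ε - (1 / 2 : ℝ) • T q.2.2))]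
  refine ⟨fun hmin => ?_, ?_⟩
  · obtain ⟨α, β, R⟩ := p
    have hle : quadraticCost c ε Γ Sgm T Ψ α β R ≤ K := by
      rw [← hK]
      exact isMinOn_iff.mp hmin (partialMinimizer ε Sgm T R₀) hR₀
    rw [key α β hp] at hle
    have hα := sq_nonneg (α + (Sgm * R).trace / 2)
    have hβ := hSgm.dotProduct_mulVec_self_nonneg (β - Sgm⁻¹ *ᵥ (ε - (1 / 2 : ℝ) • T R))
    obtain rfl : R = R₀ := by
      by_contra hne
      linarith [hG _ (hp.sub hR₀) (sub_ne_zero.mpr hne)]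
    rw [sub_self, map_zero, Matrix.mul_zero, trace_zero, zero_div, add_zero] at hle
    obtain rfl : β = Sgm⁻¹ *ᵥ (ε - (1 / 2 : ℝ) • T R) :=
      sub_eq_zero.mp (hSgm.dotProduct_mulVec_self_eq_zero_iff.mp (by linarith))
    obtain rfl : α = -(Sgm * R).trace / 2 := by
      have hsq : (α + (Sgm * R).trace / 2) ^ 2 = 0 := by linarith
      linarith [pow_eq_zero_iff two_ne_zero |>.mp hsq]
    rfl
  · rintro rfl
    exact isMinOn_iff.mpr fun q hq => hK.trans_le (hK_le q hq)

end

theorem mean_square_optimal_quadratic_approximation_general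
    {n : ℕ}
    (ε : Fin n → ℝ) (Γ Sgm : Matrix (Fin n) (Fin n) ℝ)
    (hΓ : Γ.IsSymm) (hSgmSymm : Sgm.IsSymm)
    (T : Matrix (Fin n) (Fin n) ℝ →ₗ[ℝ] (Fin n → ℝ))
    (Tdag : (Fin n → ℝ) →ₗ[ℝ] Matrix (Fin n) (Fin n) ℝ)
    (hTdagSymm : ∀ β : Fin n → ℝ, (Tdag β).IsSymm)
    (hTdag : ∀ (β : Fin n → ℝ) (R : Matrix (Fin n) (Fin n) ℝ), R.IsSymm →
      β ⬝ᵥ T R = (Tdag β * R).trace)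
    (Ψ : Matrix (Fin n) (Fin n) ℝ →ₗ[ℝ] Matrix (Fin n) (Fin n) ℝ)
    (hΨsymm : ∀ R : Matrix (Fin n) (Fin n) ℝ, R.IsSymm → (Ψ R).IsSymm)
    (hΨsa : ∀ X Y : Matrix (Fin n) (Fin n) ℝ, X.IsSymm → Y.IsSymm →
      (X * Ψ Y).trace = (Ψ X * Y).trace)
    (c : ℝ)
    (Q : ℝ → (Fin n → ℝ) → Matrix (Fin n) (Fin n) ℝ → ℝ)
    (hQ : ∀ (α : ℝ) (β : Fin n → ℝ) (R : Matrix (Fin n) (Fin n) ℝ),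
      Q α β R = c - 2 * (ε ⬝ᵥ β) - (Γ * R).trace + α ^ 2
        + α * (Sgm * R).trace + β ⬝ᵥ (Sgm *ᵥ β) + β ⬝ᵥ T R
        + (R * Ψ R).trace / 4)
    (G : Matrix (Fin n) (Fin n) ℝ → Matrix (Fin n) (Fin n) ℝ)
    (hG : ∀ R : Matrix (Fin n) (Fin n) ℝ,
      G R = Ψ R - (Sgm * R).trace • Sgm - Tdag (Sgm⁻¹ *ᵥ T R))
    (hSgmPd : Sgm.PosDef)
    (hGpd : ∀ R : Matrix (Fin n) (Fin n) ℝ, R.IsSymm → R ≠ 0 →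
      0 < (R * G R).trace) :
    (∃! p : ℝ × (Fin n → ℝ) × Matrix (Fin n) (Fin n) ℝ,
      p.2.2.IsSymm ∧
      ∀ q : ℝ × (Fin n → ℝ) × Matrix (Fin n) (Fin n) ℝ,
        q.2.2.IsSymm → Q p.1 p.2.1 p.2.2 ≤ Q q.1 q.2.1 q.2.2) ∧
    (∀ p : ℝ × (Fin n → ℝ) × Matrix (Fin n) (Fin n) ℝ,
      p.2.2.IsSymm →
      (∀ q : ℝ × (Fin n → ℝ) × Matrix (Fin n) (Fin n) ℝ,
        q.2.2.IsSymm → Q p.1 p.2.1 p.2.2 ≤ Q q.1 q.2.1 q.2.2) →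
      G p.2.2 = (2 : ℝ) • (Γ - Tdag (Sgm⁻¹ *ᵥ ε)) ∧
      p.2.1 = Sgm⁻¹ *ᵥ (ε - (1 / 2 : ℝ) • T p.2.2) ∧
      p.1 = -(Sgm * p.2.2).trace / 2) := by
  obtain rfl : G = reducedHessian Sgm T Tdag Ψ := funext hG
  obtain rfl : Q = quadraticCost c ε Γ Sgm T Ψ :=
    funext fun α => funext fun β => funext (hQ α β)
  obtain ⟨R₀, hR₀, hGR₀⟩ := exists_isSymm_apply_eq
    (fun R hR => isSymm_reducedHessian hSgmSymm hTdagSymm hΨsymm hR)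
    (fun R hR hGR => by_contra fun hne =>
      (hGpd R hR hne).ne' (by rw [hGR, Matrix.mul_zero, trace_zero]))
    ((hΓ.sub (hTdagSymm _)).smul (2 : ℝ))
  have hmin p hp := isMinOn_quadraticCost_iff c ε Γ hSgmPd hTdag hΨsa hGpd hR₀ hGR₀ (p := p) hp
  refine ⟨⟨partialMinimizer ε Sgm T R₀, ⟨hR₀, isMinOn_iff.mp ((hmin _ hR₀).mpr rfl)⟩,
    fun p hp => (hmin p hp.1).mp (isMinOn_iff.mpr hp.2)⟩, fun p hp hpmin => ?_⟩
  obtain rfl := (hmin p hp).mp (isMinOn_iff.mpr hpmin)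
  exact ⟨hGR₀, rfl, rfl⟩

/-- Theorem 1 of the paper: mean square optimal quadratic approximation of the
Hamiltonian, stated at the level of the moment data `ε, Γ, Σ, T, Ψ`.  The
quadratic cost `Q` has a unique global minimizer over `ℝ × ℝⁿ × S_n`, and the
minimizer `(α⋄, β⋄, R⋄)` satisfies `G(R⋄) = 2(Γ − T†(Σ⁻¹ε))`
(i.e. `R⋄ = 2 G⁻¹(Γ − T†(Σ⁻¹ε))`), `β⋄ = Σ⁻¹(ε − T(R⋄)/2)` and
`α⋄ = −⟨Σ, R⋄⟩/2`. -/
theorem mean_square_optimal_quadratic_approximation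
    {n : ℕ} (hn : 1 ≤ n)
    (ε : Fin n → ℝ) (Γ Sgm : Matrix (Fin n) (Fin n) ℝ)
    (hΓ : Γ.IsSymm) (hSgmSymm : Sgm.IsSymm)
    (T : Matrix (Fin n) (Fin n) ℝ →ₗ[ℝ] (Fin n → ℝ))
    (Tdag : (Fin n → ℝ) →ₗ[ℝ] Matrix (Fin n) (Fin n) ℝ)
    (hTdagSymm : ∀ β : Fin n → ℝ, (Tdag β).IsSymm)
    (hTdag : ∀ (β : Fin n → ℝ) (R : Matrix (Fin n) (Fin n) ℝ), R.IsSymm →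
      β ⬝ᵥ T R = (Tdag β * R).trace)
    (Ψ : Matrix (Fin n) (Fin n) ℝ →ₗ[ℝ] Matrix (Fin n) (Fin n) ℝ)
    (hΨsymm : ∀ R : Matrix (Fin n) (Fin n) ℝ, R.IsSymm → (Ψ R).IsSymm)
    (hΨsa : ∀ X Y : Matrix (Fin n) (Fin n) ℝ, X.IsSymm → Y.IsSymm →
      (X * Ψ Y).trace = (Ψ X * Y).trace)
    (c : ℝ)
    (Q : ℝ → (Fin n → ℝ) → Matrix (Fin n) (Fin n) ℝ → ℝ)
    (hQ : ∀ (α : ℝ) (β : Fin n → ℝ) (R : Matrix (Fin n) (Fin n) ℝ),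
      Q α β R = c - 2 * (ε ⬝ᵥ β) - (Γ * R).trace + α ^ 2
        + α * (Sgm * R).trace + β ⬝ᵥ (Sgm *ᵥ β) + β ⬝ᵥ T R
        + (R * Ψ R).trace / 4)
    (G : Matrix (Fin n) (Fin n) ℝ → Matrix (Fin n) (Fin n) ℝ)
    (hG : ∀ R : Matrix (Fin n) (Fin n) ℝ,
      G R = Ψ R - (Sgm * R).trace • Sgm - Tdag (Sgm⁻¹ *ᵥ T R))
    (hSgmPd : Sgm.PosDef)
    (hGpd : ∀ R : Matrix (Fin n) (Fin n) ℝ, R.IsSymm → R ≠ 0 →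
      0 < (R * G R).trace) :
    (∃! p : ℝ × (Fin n → ℝ) × Matrix (Fin n) (Fin n) ℝ,
      p.2.2.IsSymm ∧
      ∀ q : ℝ × (Fin n → ℝ) × Matrix (Fin n) (Fin n) ℝ,
        q.2.2.IsSymm → Q p.1 p.2.1 p.2.2 ≤ Q q.1 q.2.1 q.2.2) ∧
    (∀ p : ℝ × (Fin n → ℝ) × Matrix (Fin n) (Fin n) ℝ,
      p.2.2.IsSymm →
      (∀ q : ℝ × (Fin n → ℝ) × Matrix (Fin n) (Fin n) ℝ,
        q.2.2.IsSymm → Q p.1 p.2.1 p.2.2 ≤ Q q.1 q.2.1 q.2.2) →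
      G p.2.2 = (2 : ℝ) • (Γ - Tdag (Sgm⁻¹ *ᵥ ε)) ∧
      p.2.1 = Sgm⁻¹ *ᵥ (ε - (1 / 2 : ℝ) • T p.2.2) ∧
      p.1 = -(Sgm * p.2.2).trace / 2) :=
  mean_square_optimal_quadratic_approximation_general ε Γ Sgm hΓ hSgmSymm T Tdag hTdagSymm hTdag Ψ
    hΨsymm hΨsa c Q hQ G hG hSgmPd hGpd
end

section
/- Let n ≥ 1, let Σ ∈ S_n, let T : S_n → ℝⁿ be a linear map with adjoint T† : ℝⁿ → S_n (i.e. β·T(R) = ⟨T†(β), R⟩ for all β, R), and let Ψ : S_n → S_n be a self-adjoint linear operator. Define the self-adjoint linear operator Π on the inner product space ℝ × ℝⁿ × S_n (with inner product ⟨(α,β,R),(α′,β′,R′)⟩ := αα′ + βᵀβ′ + ⟨R,R′⟩) by Π(α, β, R) := ( α + ⟨Σ, R⟩/2 , Σβ + T(R)/2 , αΣ/2 + T†(β)/2 + Ψ(R)/4 ). Then Π is positive definite if and only if Σ is positive definite and the self-adjoint operator G := Ψ − Σ⟨Σ, ·⟩ − T† ∘ Σ⁻¹ ∘ T on S_n is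 positive definite. -/
/-!
Writing `s = ⟨Σ, R⟩` and `c = Σ⁻¹ T(R)`, completing the square twice turns the quadratic form
of `Π` into
`⟨p, Π p⟩ = (α + s/2)² + (β + c/2)ᵀ Σ (β + c/2) + ¼ ⟨R, G R⟩`.
The first two terms can be made to vanish independently of `R`, so `Π ≻ 0` forces `G ≻ 0`,
and conversely; `Σ ≻ 0` is read off from the test vectors `(0, β, 0)`.
-/

open Matrix

section

variable {ι : Type*} [Fintype ι]

theorem Matrix.IsSymm.dotProduct_mulVec_complete_square {S : Matrix ι ι ℝ} (hS : S.IsSymm)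
    (β c : ι → ℝ) :
    β ⬝ᵥ (S *ᵥ β) + β ⬝ᵥ (S *ᵥ c) =
      (β + (1 / 2 : ℝ) • c) ⬝ᵥ (S *ᵥ (β + (1 / 2 : ℝ) • c)) - 1 / 4 * (c ⬝ᵥ (S *ᵥ c)) := by
  have hcβ : c ⬝ᵥ (S *ᵥ β) = β ⬝ᵥ (S *ᵥ c) := by
    rw [dotProduct_mulVec, ← mulVec_transpose, hS.eq, dotProduct_comm]
  simp only [mulVec_add, mulVec_smul, add_dotProduct, dotProduct_add, smul_dotProduct,
    dotProduct_smul, smul_eq_mul, hcβ]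
  ring

theorem Matrix.PosDef.sq_add_dotProduct_mulVec_pos {S : Matrix ι ι ℝ} (hS : S.PosDef)
    {α : ℝ} {β : ι → ℝ} (h : (α, β) ≠ 0) : 0 < α ^ 2 + β ⬝ᵥ (S *ᵥ β) := by
  by_cases hβ : β = 0
  · have hα : α ≠ 0 := fun hα ↦ h (by simp [hα, hβ])
    simp only [hβ, mulVec_zero, dotProduct_zero, add_zero]
    positivity
  · have hβS := hS.dotProduct_mulVec_pos hβ
    rw [star_trivial] at hβS
    positivity

variable [DecidableEq ι] (Sgm : Matrix ι ι ℝ) (T : Matrix ι ι ℝ →ₗ[ℝ] (ι → ℝ))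
  (Tdag : (ι → ℝ) →ₗ[ℝ] Matrix ι ι ℝ) (Ψ : Matrix ι ι ℝ →ₗ[ℝ] Matrix ι ι ℝ)

theorem quadForm_Pi_eq_sq_add_schur (hS : Sgm.IsSymm) (hdet : IsUnit Sgm.det)
    {R : Matrix ι ι ℝ} (hadj : ∀ β, β ⬝ᵥ T R = (Tdag β * R).trace) (α : ℝ) (β : ι → ℝ) :
    α * (α + (Sgm * R).trace / 2) + β ⬝ᵥ (Sgm *ᵥ β + (1 / 2 : ℝ) • T R)
        + (R * ((α / 2) • Sgm + (1 / 2 : ℝ) • Tdag β + (1 / 4 : ℝ) • Ψ R)).trace =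
      (α + (Sgm * R).trace / 2) ^ 2
        + (β + (1 / 2 : ℝ) • (Sgm⁻¹ *ᵥ T R)) ⬝ᵥ (Sgm *ᵥ (β + (1 / 2 : ℝ) • (Sgm⁻¹ *ᵥ T R)))
        + 1 / 4 * (R * (Ψ R - (Sgm * R).trace • Sgm - Tdag (Sgm⁻¹ *ᵥ T R))).trace := by
  set c := Sgm⁻¹ *ᵥ T R
  have hc : T R = Sgm *ᵥ c := by rw [mulVec_mulVec, mul_nonsing_inv _ hdet, one_mulVec]
  have htr (γ : ι → ℝ) : (R * Tdag γ).trace = γ ⬝ᵥ (Sgm *ᵥ c) := by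
    rw [trace_mul_comm, ← hadj, hc]
  have := hS.dotProduct_mulVec_complete_square β c
  simp only [dotProduct_add, dotProduct_smul, mul_add, mul_sub, Matrix.mul_smul, trace_add,
    trace_sub, trace_smul, smul_eq_mul, trace_mul_comm R Sgm, htr, ← hc] at this ⊢
  linear_combination this

end

theorem schur_complement_criterion_for_Pi_general
    {n : ℕ}
    (Sgm : Matrix (Fin n) (Fin n) ℝ) (hSgmSymm : Sgm.IsSymm)
    (T : Matrix (Fin n) (Fin n) ℝ →ₗ[ℝ] (Fin n → ℝ))
    (Tdag : (Fin n → ℝ) →ₗ[ℝ] Matrix (Fin n) (Fin n) ℝ)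
    (hTdag : ∀ (β : Fin n → ℝ) (R : Matrix (Fin n) (Fin n) ℝ), R.IsSymm →
      β ⬝ᵥ T R = (Tdag β * R).trace)
    (Ψ : Matrix (Fin n) (Fin n) ℝ →ₗ[ℝ] Matrix (Fin n) (Fin n) ℝ)
    (Pi : ℝ × (Fin n → ℝ) × Matrix (Fin n) (Fin n) ℝ →
      ℝ × (Fin n → ℝ) × Matrix (Fin n) (Fin n) ℝ)
    (hPi : ∀ (α : ℝ) (β : Fin n → ℝ) (R : Matrix (Fin n) (Fin n) ℝ),
      Pi (α, β, R) =
        (α + (Sgm * R).trace / 2,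
         Sgm *ᵥ β + (1 / 2 : ℝ) • T R,
         (α / 2) • Sgm + (1 / 2 : ℝ) • Tdag β + (1 / 4 : ℝ) • Ψ R)) :
    (∀ p : ℝ × (Fin n → ℝ) × Matrix (Fin n) (Fin n) ℝ,
      p.2.2.IsSymm → p ≠ 0 →
        0 < p.1 * (Pi p).1 + p.2.1 ⬝ᵥ (Pi p).2.1 + (p.2.2 * (Pi p).2.2).trace)
    ↔
    (Sgm.PosDef ∧
      ∀ R : Matrix (Fin n) (Fin n) ℝ, R.IsSymm → R ≠ 0 →
        0 < (R * (Ψ R - (Sgm * R).trace • Sgm - Tdag (Sgm⁻¹ *ᵥ T R))).trace) := by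
  have hform (hS : Sgm.PosDef) (α : ℝ) (β : Fin n → ℝ) (R : Matrix (Fin n) (Fin n) ℝ)
      (hR : R.IsSymm) :=
    quadForm_Pi_eq_sq_add_schur Sgm T Tdag Ψ hSgmSymm hS.det_pos.ne'.isUnit
      (fun β ↦ hTdag β R hR) α β
  constructor
  · intro hPos
    have hS : Sgm.PosDef := by
      refine .of_dotProduct_mulVec_pos (isHermitian_iff_isSymm.mpr hSgmSymm) fun x hx ↦ ?_
      simpa [hPi] using hPos (0, x, 0) (by simp [IsSymm]) (by simp [hx])
    refine ⟨hS, fun R hR hR0 ↦ ?_⟩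
    -- the test vector that makes both squares in `hform` vanish
    have := hPos (-(Sgm * R).trace / 2, -(1 / 2 : ℝ) • (Sgm⁻¹ *ᵥ T R), R) hR (by simp [hR0])
    rw [hPi, hform hS _ _ _ hR] at this
    simpa [neg_div] using this
  · rintro ⟨hS, hG⟩ ⟨α, β, R⟩ hR hp
    dsimp only at hR ⊢
    rw [hPi, hform hS α β R hR]
    by_cases hR0 : R = 0
    · subst hR0
      simpa using hS.sq_add_dotProduct_mulVec_pos (α := α) (β := β) (by simpa using hp)
    · have hv := hS.posSemidef.dotProduct_mulVec_nonneg (β + (1 / 2 : ℝ) • (Sgm⁻¹ *ᵥ T R))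
      rw [star_trivial] at hv
      have hGR := hG R hR hR0
      positivity

/-- Generalized Schur complement criterion: the self-adjoint operator `Π` on
`ℝ × ℝⁿ × S_n`, built from the moment data `Σ, T, Ψ`, is positive definite if
and only if `Σ ≻ 0` and the Schur complement operator
`G = Ψ − Σ⟨Σ, ·⟩ − T† ∘ Σ⁻¹ ∘ T` on `S_n` is positive definite. -/
theorem schur_complement_criterion_for_Pi
    {n : ℕ} (hn : 1 ≤ n)
    (Sgm : Matrix (Fin n) (Fin n) ℝ) (hSgmSymm : Sgm.IsSymm)
    (T : Matrix (Fin n) (Fin n) ℝ →ₗ[ℝ] (Fin n → ℝ))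
    (Tdag : (Fin n → ℝ) →ₗ[ℝ] Matrix (Fin n) (Fin n) ℝ)
    (hTdagSymm : ∀ β : Fin n → ℝ, (Tdag β).IsSymm)
    (hTdag : ∀ (β : Fin n → ℝ) (R : Matrix (Fin n) (Fin n) ℝ), R.IsSymm →
      β ⬝ᵥ T R = (Tdag β * R).trace)
    (Ψ : Matrix (Fin n) (Fin n) ℝ →ₗ[ℝ] Matrix (Fin n) (Fin n) ℝ)
    (hΨsymm : ∀ R : Matrix (Fin n) (Fin n) ℝ, R.IsSymm → (Ψ R).IsSymm)
    (hΨsa : ∀ X Y : Matrix (Fin n) (Fin n) ℝ, X.IsSymm → Y.IsSymm →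
      (X * Ψ Y).trace = (Ψ X * Y).trace)
    (Pi : ℝ × (Fin n → ℝ) × Matrix (Fin n) (Fin n) ℝ →
      ℝ × (Fin n → ℝ) × Matrix (Fin n) (Fin n) ℝ)
    (hPi : ∀ (α : ℝ) (β : Fin n → ℝ) (R : Matrix (Fin n) (Fin n) ℝ),
      Pi (α, β, R) =
        (α + (Sgm * R).trace / 2,
         Sgm *ᵥ β + (1 / 2 : ℝ) • T R,
         (α / 2) • Sgm + (1 / 2 : ℝ) • Tdag β + (1 / 4 : ℝ) • Ψ R)) :
    (∀ p : ℝ × (Fin n → ℝ) × Matrix (Fin n) (Fin n) ℝ,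
      p.2.2.IsSymm → p ≠ 0 →
        0 < p.1 * (Pi p).1 + p.2.1 ⬝ᵥ (Pi p).2.1 + (p.2.2 * (Pi p).2.2).trace)
    ↔
    (Sgm.PosDef ∧
      ∀ R : Matrix (Fin n) (Fin n) ℝ, R.IsSymm → R ≠ 0 →
        0 < (R * (Ψ R - (Sgm * R).trace • Sgm - Tdag (Sgm⁻¹ *ᵥ T R))).trace) :=
  schur_complement_criterion_for_Pi_general Sgm hSgmSymm T Tdag hTdag Ψ Pi hPi
end

section
/- Let n ≥ 1, let ε ∈ ℝⁿ, Γ, Σ ∈ S_n, Θ ∈ A_n, and c ∈ ℝ. Suppose the complex Hermitian matrix S := Σ + (i/2)Θ is positive definite. Define the linear operator K on S_n by K(R) := ΣRΣ + ΘRΘ/4, and define Q(α, β, R) := c − 2 εᵀβ − ⟨Γ, R⟩ + α² + α⟨Σ, R⟩ + βᵀΣβ + ⟨R, ⟨Σ, R⟩Σ + 2K(R)⟩/4 on ℝ × ℝⁿ × S_n. Then K is invertible, and Q has a unique global minimizer (α⋄, β⋄, R⋄), given by R⋄ = K⁻¹(Γ), β⋄ = Σ⁻¹ε, and α⋄ =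 −⟨Σ, R⋄⟩/2. -/
open Matrix ComplexOrder

/-!
Write `S = Σ + (i/2)Θ`. The real part of `S ⊗ S` is `Σ ⊗ Σ - Θ ⊗ Θ / 4`, so for a real matrix
`R`, using `Θᵀ = -Θ`, `⟨R, K R⟩ = Re ((vec R)ᴴ (S ⊗ S) vec R)`. Since `S ⊗ S` is positive
definite, `K` is positive definite on all real matrices, hence injective and, by finite
dimensionality, bijective; as `K` commutes with transposition, it restricts to a bijection of
`S_n`. The real part of `S` is `Σ`, which is therefore positive definite too. Completing the
square gives, for symmetric `R`,
`Q(α, β, R) = Q(α⋄, β⋄, R⋄) + (α + ⟨Σ,R⟩/2)² + (β - β⋄)ᵀΣ(β - β⋄) + ⟨R - R⋄, K(R - R⋄)⟩/2`,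
and each of the three terms is nonnegative and vanishes only at the minimizer.
-/

open scoped Kronecker

variable {m : Type*}

namespace Matrix

theorem PosDef.map_re [Fintype m] {𝕜 : Type*} [RCLike 𝕜] {M : Matrix m m 𝕜} (hM : M.PosDef) :
    (M.map RCLike.re).PosDef := by
  refine .of_dotProduct_mulVec_pos ?_ fun x hx => ?_
  · ext i j
    simp [← hM.isHermitian.apply i j]
  · have hx' : (fun i => (x i : 𝕜)) ≠ 0 := fun h =>
      hx (funext fun i => by simpa using congrFun h i)
    have := (RCLike.pos_iff.mp (hM.dotProduct_mulVec_pos hx')).1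
    simpa [dotProduct, mulVec, Finset.mul_sum, mul_left_comm] using this

variable [Fintype m] {R : Type*}

theorem trace_transpose_mul_mul_mul [CommSemiring R] (A B M N : Matrix m m R) :
    (Aᵀ * (M * B * N)).trace = (Bᵀ * (Mᵀ * A * Nᵀ)).trace := by
  rw [← trace_transpose]
  simp only [transpose_mul, transpose_transpose, Matrix.mul_assoc]
  rw [trace_mul_comm Nᵀ]
  simp only [Matrix.mul_assoc]

theorem sub_dotProduct_mulVec_sub [CommRing R] {A : Matrix m m R} (hA : A.IsSymm) (x y : m → R) :
    (x - y) ⬝ᵥ (A *ᵥ (x - y)) = x ⬝ᵥ (A *ᵥ x) - 2 * (x ⬝ᵥ (A *ᵥ y)) + y ⬝ᵥ (A *ᵥ y) := by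
  have hyx : y ⬝ᵥ (A *ᵥ x) = x ⬝ᵥ (A *ᵥ y) := by
    rw [dotProduct_mulVec, ← mulVec_transpose, hA.eq, dotProduct_comm]
  simp only [mulVec_sub, sub_dotProduct, dotProduct_sub, hyx]
  ring

end Matrix

noncomputable def quantumCovariance (Sgm Θ : Matrix m m ℝ) : Matrix m m ℂ :=
  Sgm.map Complex.ofReal + (Complex.I / 2) • Θ.map Complex.ofReal

theorem map_re_quantumCovariance (Sgm Θ : Matrix m m ℝ) :
    (quantumCovariance Sgm Θ).map RCLike.re = Sgm := by
  ext i j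
  simp [quantumCovariance]

theorem map_re_kronecker_quantumCovariance (Sgm Θ : Matrix m m ℝ) :
    (quantumCovariance Sgm Θ ⊗ₖ quantumCovariance Sgm Θ).map RCLike.re
      = Sgm ⊗ₖ Sgm - (1 / 4 : ℝ) • Θ ⊗ₖ Θ := by
  ext ⟨i, j⟩ ⟨k, l⟩
  simp [quantumCovariance]
  ring

variable [Fintype m] {Sgm Θ : Matrix m m ℝ}

theorem posDef_of_posDef_quantumCovariance (hS : (quantumCovariance Sgm Θ).PosDef) :
    Sgm.PosDef :=
  map_re_quantumCovariance Sgm Θ ▸ hS.map_re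

noncomputable def covarianceSandwich (Sgm Θ : Matrix m m ℝ) :
    Matrix m m ℝ →ₗ[ℝ] Matrix m m ℝ where
  toFun R := Sgm * R * Sgm + (1 / 4 : ℝ) • (Θ * R * Θ)
  map_add' A B := by simp only [Matrix.mul_add, Matrix.add_mul, smul_add]; abel
  map_smul' r A := by simp [smul_add, smul_comm r]

theorem covarianceSandwich_apply (R : Matrix m m ℝ) :
    covarianceSandwich Sgm Θ R = Sgm * R * Sgm + (1 / 4 : ℝ) • (Θ * R * Θ) := rfl

theorem covarianceSandwich_transpose (hSgm : Sgm.IsSymm) (hΘ : Θᵀ = -Θ) (R : Matrix m m ℝ) :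
    covarianceSandwich Sgm Θ Rᵀ = (covarianceSandwich Sgm Θ R)ᵀ := by
  simp [covarianceSandwich_apply, transpose_mul, hSgm.eq, hΘ, Matrix.mul_assoc]

theorem trace_transpose_mul_covarianceSandwich_comm (hSgm : Sgm.IsSymm) (hΘ : Θᵀ = -Θ)
    (A B : Matrix m m ℝ) :
    (Aᵀ * covarianceSandwich Sgm Θ B).trace = (Bᵀ * covarianceSandwich Sgm Θ A).trace := by
  simp only [covarianceSandwich_apply, Matrix.mul_add, Matrix.mul_smul, trace_add, trace_smul,
    trace_transpose_mul_mul_mul A B, hSgm.eq, hΘ, Matrix.neg_mul, Matrix.mul_neg, neg_neg]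

theorem trace_sub_transpose_mul_covarianceSandwich_sub (hSgm : Sgm.IsSymm) (hΘ : Θᵀ = -Θ)
    (A B : Matrix m m ℝ) :
    ((A - B)ᵀ * covarianceSandwich Sgm Θ (A - B)).trace
      = (Aᵀ * covarianceSandwich Sgm Θ A).trace - 2 * (Aᵀ * covarianceSandwich Sgm Θ B).trace
        + (Bᵀ * covarianceSandwich Sgm Θ B).trace := by
  rw [map_sub, transpose_sub, Matrix.sub_mul, Matrix.mul_sub, Matrix.mul_sub, trace_sub,
    trace_sub, trace_sub, trace_transpose_mul_covarianceSandwich_comm hSgm hΘ B A]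
  ring

theorem trace_transpose_mul_covarianceSandwich_pos (hSgm : Sgm.IsSymm) (hΘ : Θᵀ = -Θ)
    (hS : (quantumCovariance Sgm Θ).PosDef) {R : Matrix m m ℝ} (hR : R ≠ 0) :
    0 < (Rᵀ * covarianceSandwich Sgm Θ R).trace := by
  have hvec : (Sgm ⊗ₖ Sgm - (1 / 4 : ℝ) • Θ ⊗ₖ Θ) *ᵥ vec R = vec (covarianceSandwich Sgm Θ R) := by
    rw [sub_mulVec, smul_mulVec, kronecker_mulVec_vec, kronecker_mulVec_vec, hSgm.eq, hΘ,
      covarianceSandwich_apply, vec_add, vec_smul, Matrix.mul_neg, vec_neg, smul_neg,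
      sub_neg_eq_add]
  have := (hS.kronecker hS).map_re.dotProduct_mulVec_pos (vec_eq_zero_iff.not.mpr hR)
  rwa [map_re_kronecker_quantumCovariance, hvec, star_trivial, vec_dotProduct_vec] at this

theorem trace_transpose_mul_covarianceSandwich_nonneg (hSgm : Sgm.IsSymm) (hΘ : Θᵀ = -Θ)
    (hS : (quantumCovariance Sgm Θ).PosDef) (R : Matrix m m ℝ) :
    0 ≤ (Rᵀ * covarianceSandwich Sgm Θ R).trace := by
  rcases eq_or_ne R 0 with rfl | hR
  · simp
  · exact (trace_transpose_mul_covarianceSandwich_pos hSgm hΘ hS hR).le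

theorem trace_transpose_mul_covarianceSandwich_eq_zero_iff (hSgm : Sgm.IsSymm) (hΘ : Θᵀ = -Θ)
    (hS : (quantumCovariance Sgm Θ).PosDef) {R : Matrix m m ℝ} :
    (Rᵀ * covarianceSandwich Sgm Θ R).trace = 0 ↔ R = 0 := by
  refine ⟨fun h => ?_, fun h => by simp [h]⟩
  by_contra hR
  exact (trace_transpose_mul_covarianceSandwich_pos hSgm hΘ hS hR).ne' h

theorem covarianceSandwich_injective (hSgm : Sgm.IsSymm) (hΘ : Θᵀ = -Θ)
    (hS : (quantumCovariance Sgm Θ).PosDef) : Function.Injective (covarianceSandwich Sgm Θ) :=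
  (injective_iff_map_eq_zero _).2 fun R hR =>
    (trace_transpose_mul_covarianceSandwich_eq_zero_iff hSgm hΘ hS).1 (by simp [hR])

theorem existsUnique_isSymm_covarianceSandwich_eq (hSgm : Sgm.IsSymm) (hΘ : Θᵀ = -Θ)
    (hS : (quantumCovariance Sgm Θ).PosDef) {Y : Matrix m m ℝ} (hY : Y.IsSymm) :
    ∃! R, R.IsSymm ∧ covarianceSandwich Sgm Θ R = Y := by
  have hinj := covarianceSandwich_injective hSgm hΘ hS
  obtain ⟨R, rfl⟩ := LinearMap.injective_iff_surjective.mp hinj Y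
  refine ⟨R, ⟨hinj ?_, rfl⟩, fun R' hR' => hinj hR'.2⟩
  rw [covarianceSandwich_transpose hSgm hΘ, hY.eq]

noncomputable def gaussianCost (c : ℝ) (ε : m → ℝ) (Γ Sgm Θ : Matrix m m ℝ) (α : ℝ) (β : m → ℝ)
    (R : Matrix m m ℝ) : ℝ :=
  c - 2 * (ε ⬝ᵥ β) - (Γ * R).trace + α ^ 2 + α * (Sgm * R).trace + β ⬝ᵥ (Sgm *ᵥ β)
    + (R * ((Sgm * R).trace • Sgm + (2 : ℝ) • covarianceSandwich Sgm Θ R)).trace / 4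

section

variable {c : ℝ} {ε : m → ℝ} {Γ : Matrix m m ℝ} {β₀ : m → ℝ} {R₀ : Matrix m m ℝ}

theorem gaussianCost_eq_add (hSgm : Sgm.IsSymm) (hΘ : Θᵀ = -Θ) (hR₀ : R₀.IsSymm)
    (hΓ : covarianceSandwich Sgm Θ R₀ = Γ) (hε : Sgm *ᵥ β₀ = ε) (α : ℝ) (β : m → ℝ)
    {R : Matrix m m ℝ} (hR : R.IsSymm) :
    gaussianCost c ε Γ Sgm Θ α β R
      = gaussianCost c ε Γ Sgm Θ (-(Sgm * R₀).trace / 2) β₀ R₀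
        + (α + (Sgm * R).trace / 2) ^ 2 + (β - β₀) ⬝ᵥ (Sgm *ᵥ (β - β₀))
        + ((R - R₀)ᵀ * covarianceSandwich Sgm Θ (R - R₀)).trace / 2 := by
  have hquartic : ∀ X : Matrix m m ℝ, X.IsSymm →
      (X * ((Sgm * X).trace • Sgm + (2 : ℝ) • covarianceSandwich Sgm Θ X)).trace
        = (Sgm * X).trace ^ 2 + 2 * (Xᵀ * covarianceSandwich Sgm Θ X).trace := by
    intro X hX
    rw [Matrix.mul_add, trace_add, Matrix.mul_smul, Matrix.mul_smul, trace_smul, trace_smul,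
      trace_mul_comm X Sgm, hX.eq, smul_eq_mul, smul_eq_mul, sq]
  have hlinear : ∀ X : Matrix m m ℝ, X.IsSymm →
      (Γ * X).trace = (Xᵀ * covarianceSandwich Sgm Θ R₀).trace := by
    intro X hX
    rw [← hΓ, trace_mul_comm, hX.eq]
  rw [gaussianCost, gaussianCost, hquartic R hR, hquartic R₀ hR₀, hlinear R hR, hlinear R₀ hR₀,
    sub_dotProduct_mulVec_sub hSgm, trace_sub_transpose_mul_covarianceSandwich_sub hSgm hΘ, hε,
    dotProduct_comm β ε, dotProduct_comm β₀ ε]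
  ring

theorem isMinimizer_gaussianCost_iff (hSgm : Sgm.IsSymm) (hΘ : Θᵀ = -Θ) (hR₀ : R₀.IsSymm)
    (hΓ : covarianceSandwich Sgm Θ R₀ = Γ) (hε : Sgm *ᵥ β₀ = ε)
    (hS : (quantumCovariance Sgm Θ).PosDef)
    {p : ℝ × (m → ℝ) × Matrix m m ℝ} (hp : p.2.2.IsSymm) :
    (∀ q : ℝ × (m → ℝ) × Matrix m m ℝ, q.2.2.IsSymm →
        gaussianCost c ε Γ Sgm Θ p.1 p.2.1 p.2.2 ≤ gaussianCost c ε Γ Sgm Θ q.1 q.2.1 q.2.2) ↔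
      p = (-(Sgm * R₀).trace / 2, β₀, R₀) := by
  obtain ⟨α, β, R⟩ := p
  dsimp only at hp
  have hSgmPD := posDef_of_posDef_quantumCovariance hS
  have hSgm_nonneg (x : m → ℝ) : 0 ≤ x ⬝ᵥ (Sgm *ᵥ x) := by
    simpa using hSgmPD.posSemidef.dotProduct_mulVec_nonneg x
  have hK_nonneg := trace_transpose_mul_covarianceSandwich_nonneg hSgm hΘ hS
  have hcost := gaussianCost_eq_add (c := c) hSgm hΘ hR₀ hΓ hε
  constructor
  · intro hmin
    have hle := hmin (-(Sgm * R₀).trace / 2, β₀, R₀) hR₀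
    dsimp only at hle
    rw [hcost α β hp] at hle
    have h₁ := sq_nonneg (α + (Sgm * R).trace / 2)
    have h₂ := hSgm_nonneg (β - β₀)
    have h₃ := hK_nonneg (R - R₀)
    have hα : (α + (Sgm * R).trace / 2) ^ 2 = 0 := by linarith
    have hββ₀ : (β - β₀) ⬝ᵥ (Sgm *ᵥ (β - β₀)) = 0 := by linarith
    have hRR₀ : ((R - R₀)ᵀ * covarianceSandwich Sgm Θ (R - R₀)).trace = 0 := by linarith
    obtain rfl : R = R₀ :=
      sub_eq_zero.mp ((trace_transpose_mul_covarianceSandwich_eq_zero_iff hSgm hΘ hS).mp hRR₀)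
    obtain rfl : β = β₀ := by
      by_contra hne
      simpa [hββ₀] using hSgmPD.dotProduct_mulVec_pos (sub_ne_zero.mpr hne)
    obtain rfl : α = -(Sgm * R).trace / 2 := by linarith [pow_eq_zero_iff two_ne_zero |>.mp hα]
    rfl
  · rintro ⟨⟩ ⟨α', β', R'⟩ hR'
    dsimp only at hR' ⊢
    rw [hcost α' β' hR']
    linarith [hSgm_nonneg (β' - β₀), hK_nonneg (R' - R₀), sq_nonneg (α' + (Sgm * R').trace / 2)]

end

theorem gaussian_state_optimal_quadratic_approximation_general
    {n : ℕ}
    (ε : Fin n → ℝ) (Γ Sgm Θ : Matrix (Fin n) (Fin n) ℝ) (c : ℝ)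
    (hΓ : Γ.IsSymm) (hSgmSymm : Sgm.IsSymm) (hΘ : Θᵀ = -Θ)
    (hS : (Sgm.map (Complex.ofReal) +
      (Complex.I / 2) • Θ.map (Complex.ofReal)).PosDef)
    (K : Matrix (Fin n) (Fin n) ℝ → Matrix (Fin n) (Fin n) ℝ)
    (hK : ∀ R : Matrix (Fin n) (Fin n) ℝ,
      K R = Sgm * R * Sgm + (1 / 4 : ℝ) • (Θ * R * Θ))
    (Q : ℝ → (Fin n → ℝ) → Matrix (Fin n) (Fin n) ℝ → ℝ)
    (hQ : ∀ (α : ℝ) (β : Fin n → ℝ) (R : Matrix (Fin n) (Fin n) ℝ),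
      Q α β R = c - 2 * (ε ⬝ᵥ β) - (Γ * R).trace + α ^ 2
        + α * (Sgm * R).trace + β ⬝ᵥ (Sgm *ᵥ β)
        + (R * ((Sgm * R).trace • Sgm + (2 : ℝ) • K R)).trace / 4) :
    (∀ Y : Matrix (Fin n) (Fin n) ℝ, Y.IsSymm →
      ∃! R : Matrix (Fin n) (Fin n) ℝ, R.IsSymm ∧ K R = Y) ∧
    (∃! p : ℝ × (Fin n → ℝ) × Matrix (Fin n) (Fin n) ℝ,
      p.2.2.IsSymm ∧
      ∀ q : ℝ × (Fin n → ℝ) × Matrix (Fin n) (Fin n) ℝ,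
        q.2.2.IsSymm → Q p.1 p.2.1 p.2.2 ≤ Q q.1 q.2.1 q.2.2) ∧
    (∀ p : ℝ × (Fin n → ℝ) × Matrix (Fin n) (Fin n) ℝ,
      p.2.2.IsSymm →
      (∀ q : ℝ × (Fin n → ℝ) × Matrix (Fin n) (Fin n) ℝ,
        q.2.2.IsSymm → Q p.1 p.2.1 p.2.2 ≤ Q q.1 q.2.1 q.2.2) →
      K p.2.2 = Γ ∧
      p.2.1 = Sgm⁻¹ *ᵥ ε ∧
      p.1 = -(Sgm * p.2.2).trace / 2) := by
  obtain rfl : K = covarianceSandwich Sgm Θ := funext hK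
  obtain rfl : Q = gaussianCost c ε Γ Sgm Θ := funext fun α => funext fun β => funext (hQ α β)
  obtain ⟨R₀, ⟨hR₀, hΓR₀⟩, -⟩ := existsUnique_isSymm_covarianceSandwich_eq hSgmSymm hΘ hS hΓ
  have hε : Sgm *ᵥ (Sgm⁻¹ *ᵥ ε) = ε := by
    rw [mulVec_mulVec, mul_nonsing_inv _ (posDef_of_posDef_quantumCovariance hS).det_pos.ne'.isUnit,
      one_mulVec]
  have hmin (p : ℝ × (Fin n → ℝ) × Matrix (Fin n) (Fin n) ℝ) (hp : p.2.2.IsSymm) :=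
    isMinimizer_gaussianCost_iff (c := c) hSgmSymm hΘ hR₀ hΓR₀ hε hS hp
  refine ⟨fun Y hY => existsUnique_isSymm_covarianceSandwich_eq hSgmSymm hΘ hS hY,
    ⟨_, ⟨hR₀, (hmin _ hR₀).2 rfl⟩, fun p hp => (hmin p hp.1).1 hp.2⟩, fun p hp hpmin => ?_⟩
  obtain rfl := (hmin p hp).1 hpmin
  exact ⟨hΓR₀, rfl, rfl⟩

/-- Theorem 2 of the paper: Gaussian-state specialization of the mean square
optimal quadratic approximation.  Here the third-moment map vanishes and the
fourth-moment operator is `Ψ(R) = ⟨Σ,R⟩Σ + 2K(R)` with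
`K(R) = ΣRΣ + ΘRΘ/4`.  If the quantum covariance matrix `S = Σ + (i/2)Θ` is
positive definite, then `K` is invertible (as an operator on `S_n`), the cost
`Q` has a unique global minimizer, and the minimizer `(α⋄, β⋄, R⋄)` satisfies
`K(R⋄) = Γ` (i.e. `R⋄ = K⁻¹(Γ)`), `β⋄ = Σ⁻¹ε` and `α⋄ = −⟨Σ, R⋄⟩/2`. -/
theorem gaussian_state_optimal_quadratic_approximation
    {n : ℕ} (hn : 1 ≤ n)
    (ε : Fin n → ℝ) (Γ Sgm Θ : Matrix (Fin n) (Fin n) ℝ) (c : ℝ)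
    (hΓ : Γ.IsSymm) (hSgmSymm : Sgm.IsSymm) (hΘ : Θᵀ = -Θ)
    (hS : (Sgm.map (Complex.ofReal) +
      (Complex.I / 2) • Θ.map (Complex.ofReal)).PosDef)
    (K : Matrix (Fin n) (Fin n) ℝ → Matrix (Fin n) (Fin n) ℝ)
    (hK : ∀ R : Matrix (Fin n) (Fin n) ℝ,
      K R = Sgm * R * Sgm + (1 / 4 : ℝ) • (Θ * R * Θ))
    (Q : ℝ → (Fin n → ℝ) → Matrix (Fin n) (Fin n) ℝ → ℝ)
    (hQ : ∀ (α : ℝ) (β : Fin n → ℝ) (R : Matrix (Fin n) (Fin n) ℝ),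
      Q α β R = c - 2 * (ε ⬝ᵥ β) - (Γ * R).trace + α ^ 2
        + α * (Sgm * R).trace + β ⬝ᵥ (Sgm *ᵥ β)
        + (R * ((Sgm * R).trace • Sgm + (2 : ℝ) • K R)).trace / 4) :
    (∀ Y : Matrix (Fin n) (Fin n) ℝ, Y.IsSymm →
      ∃! R : Matrix (Fin n) (Fin n) ℝ, R.IsSymm ∧ K R = Y) ∧
    (∃! p : ℝ × (Fin n → ℝ) × Matrix (Fin n) (Fin n) ℝ,
      p.2.2.IsSymm ∧
      ∀ q : ℝ × (Fin n → ℝ) × Matrix (Fin n) (Fin n) ℝ,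
        q.2.2.IsSymm → Q p.1 p.2.1 p.2.2 ≤ Q q.1 q.2.1 q.2.2) ∧
    (∀ p : ℝ × (Fin n → ℝ) × Matrix (Fin n) (Fin n) ℝ,
      p.2.2.IsSymm →
      (∀ q : ℝ × (Fin n → ℝ) × Matrix (Fin n) (Fin n) ℝ,
        q.2.2.IsSymm → Q p.1 p.2.1 p.2.2 ≤ Q q.1 q.2.1 q.2.2) →
      K p.2.2 = Γ ∧
      p.2.1 = Sgm⁻¹ *ᵥ ε ∧
      p.1 = -(Sgm * p.2.2).trace / 2) :=
  gaussian_state_optimal_quadratic_approximation_general ε Γ Sgm Θ c hΓ hSgmSymm hΘ hS K hK Q hQ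
end

section
/- Let n ≥ 1, Σ ∈ S_n, Θ ∈ A_n, and suppose the complex Hermitian matrix S := Σ + (i/2)Θ is positive definite. Then the linear operator K on S_n defined by K(R) := ΣRΣ + ΘRΘ/4 is positive definite: for every nonzero R ∈ S_n, Tr(R(ΣRΣ + ΘRΘ/4)) > 0. -/
/-!
Put `S = Σ + (i/2)Θ`. Its entrywise conjugate `S̄ = Σ - (i/2)Θ` equals `Sᵀ`, hence is positive
definite as well. For real `R` the mixed terms of `Tr(R S R S̄)` cancel by cyclicity of the trace,
so `Tr(R K(R)) = Tr(R S R S̄)`. Writing `S = XᴴX` and `S̄ = YᴴY` with `X`, `Y` invertible turns this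
into `Tr(MᴴM)` for `M = X R Yᴴ`, which is positive as soon as `R ≠ 0`.
-/

open Matrix ComplexOrder

namespace Matrix

theorem PosDef.map_star {n R : Type*} [Fintype n] [CommRing R] [PartialOrder R] [StarRing R]
    {A : Matrix n n R} (hA : A.PosDef) : (A.map star).PosDef := by
  -- `A.map star` is `Aᴴᵀ` by definition
  have hAt := hA.transpose
  rwa [← hA.isHermitian.eq] at hAt

section RCLike

variable {n 𝕜 : Type*} [Fintype n] [DecidableEq n] [RCLike 𝕜]

open scoped MatrixOrder in
theorem PosDef.exists_isUnit_eq_conjTranspose_mul_self {A : Matrix n n 𝕜} (hA : A.PosDef) :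
    ∃ X, IsUnit X ∧ A = Xᴴ * X :=
  CStarAlgebra.isStrictlyPositive_iff_eq_star_mul_self.mp hA.isStrictlyPositive

theorem trace_mul_mul_mul_pos_of_posDef {A B R : Matrix n n 𝕜} (hA : A.PosDef) (hB : B.PosDef)
    (hR : R.IsHermitian) (hR0 : R ≠ 0) : 0 < (R * A * R * B).trace := by
  obtain ⟨X, hX, rfl⟩ := hA.exists_isUnit_eq_conjTranspose_mul_self
  obtain ⟨Y, hY, rfl⟩ := hB.exists_isUnit_eq_conjTranspose_mul_self
  set M := X * R * Yᴴ
  have hM : M ≠ 0 := by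
    rwa [Ne, IsUnit.mul_left_eq_zero ((isUnit_conjTranspose Y).mpr hY), hX.mul_right_eq_zero]
  have htrace : (R * (Xᴴ * X) * R * (Yᴴ * Y)).trace = (Mᴴ * M).trace := by
    have hcycle := trace_mul_comm (R * (Xᴴ * X) * R * Yᴴ) Y
    simp only [M, conjTranspose_mul, conjTranspose_conjTranspose, hR.eq, Matrix.mul_assoc]
      at hcycle ⊢
    exact hcycle
  rw [htrace]
  exact (posSemidef_conjTranspose_mul_self M).trace_nonneg.lt_of_ne'
    (trace_conjTranspose_mul_self_eq_zero_iff.not.mpr hM)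

end RCLike

theorem trace_mul_add_smul_mul_mul_sub_smul {n α : Type*} [Fintype n] [CommRing α]
    (R A B : Matrix n n α) (c : α) :
    (R * (A + c • B) * R * (A - c • B)).trace =
      (R * (A * R * A - c ^ 2 • (B * R * B))).trace := by
  have hcycle : (R * A * R * B).trace = (R * B * R * A).trace := by
    simpa only [Matrix.mul_assoc] using trace_mul_comm (R * A) (R * B)
  simp only [Matrix.mul_add, Matrix.add_mul, Matrix.mul_sub, Matrix.mul_smul, Matrix.smul_mul,
    trace_add, trace_sub, trace_smul, Matrix.mul_assoc] at hcycle ⊢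
  rw [hcycle, smul_eq_mul, smul_eq_mul, smul_eq_mul, smul_eq_mul]
  ring

theorem ofReal_trace_mul_add_smul {n : Type*} [Fintype n] (R A B : Matrix n n ℝ) (r : ℝ) :
    ((R * (A * R * A + r • (B * R * B))).trace : ℂ) =
      (R.map Complex.ofReal * (A.map Complex.ofReal * R.map Complex.ofReal * A.map Complex.ofReal +
        (r : ℂ) • (B.map Complex.ofReal * R.map Complex.ofReal * B.map Complex.ofReal))).trace := by
  refine (AddMonoidHom.map_trace Complex.ofRealHom _).trans (congrArg trace ?_)
  rw [Matrix.map_mul, Matrix.map_add _ (map_add _), Matrix.map_smul' _ _ _ (map_mul _)]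
  simp only [Matrix.map_mul]
  -- `⇑Complex.ofRealHom` unfolds to `Complex.ofReal`
  rfl

end Matrix

theorem K_posdef_of_quantum_covariance_posdef_general
    {n : ℕ}
    (Sgm Θ : Matrix (Fin n) (Fin n) ℝ)
    (hS : (Sgm.map (Complex.ofReal) +
      (Complex.I / 2) • Θ.map (Complex.ofReal)).PosDef) :
    ∀ R : Matrix (Fin n) (Fin n) ℝ, R.IsSymm → R ≠ 0 →
      0 < (R * (Sgm * R * Sgm + (1 / 4 : ℝ) • (Θ * R * Θ))).trace := by
  intro R hR hR0
  set S := Sgm.map Complex.ofReal + (Complex.I / 2) • Θ.map Complex.ofReal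
  set T := Sgm.map Complex.ofReal - (Complex.I / 2) • Θ.map Complex.ofReal
  have hconj : S.map star = T := by
    ext i j; simp [S, T, sub_eq_add_neg, neg_div, map_ofNat]
  have hT : T.PosDef := hconj ▸ hS.map_star
  have hRc : (R.map Complex.ofReal).IsHermitian :=
    (isHermitian_iff_isSymm.mpr hR).map _ fun x => (Complex.conj_ofReal x).symm
  have hRc0 : R.map Complex.ofReal ≠ 0 := by
    rwa [Ne, ← Matrix.map_zero Complex.ofReal Complex.ofReal_zero,
      (Matrix.map_injective Complex.ofReal_injective).eq_iff]
  have hc : (Complex.I / 2) ^ 2 = -((1 / 4 : ℝ) : ℂ) := by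
    rw [div_pow, Complex.I_sq]; norm_num
  have htrace : ((R * (Sgm * R * Sgm + (1 / 4 : ℝ) • (Θ * R * Θ))).trace : ℂ) =
      (R.map Complex.ofReal * S * R.map Complex.ofReal * T).trace := by
    rw [trace_mul_add_smul_mul_mul_sub_smul, hc, neg_smul, sub_neg_eq_add,
      ofReal_trace_mul_add_smul]
  exact Complex.zero_lt_real.mp (htrace ▸ trace_mul_mul_mul_pos_of_posDef hS hT hRc hRc0)

/-- Lemma 2 of the paper (positive definiteness part): if the quantum
covariance matrix `S = Σ + (i/2)Θ` is positive definite, then the operator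
`K(R) = ΣRΣ + ΘRΘ/4` on the real symmetric matrices is positive definite:
`Tr(R K(R)) > 0` for every nonzero real symmetric `R`. -/
theorem K_posdef_of_quantum_covariance_posdef
    {n : ℕ} (hn : 1 ≤ n)
    (Sgm Θ : Matrix (Fin n) (Fin n) ℝ)
    (hSgmSymm : Sgm.IsSymm) (hΘ : Θᵀ = -Θ)
    (hS : (Sgm.map (Complex.ofReal) +
      (Complex.I / 2) • Θ.map (Complex.ofReal)).PosDef) :
    ∀ R : Matrix (Fin n) (Fin n) ℝ, R.IsSymm → R ≠ 0 →
      0 < (R * (Sgm * R * Sgm + (1 / 4 : ℝ) • (Θ * R * Θ))).trace :=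
  K_posdef_of_quantum_covariance_posdef_general Sgm Θ hS
end

section
/- Let n ≥ 1, let R, Σ ∈ S_n and Θ ∈ A_n, and set S := Σ + (i/2)Θ (a complex n×n matrix, with R, Σ, Θ coerced entrywise into complex matrices). Then Tr(R Sᵀ R S) = Tr(RΣRΣ) + (1/4)·Tr(RΘRΘ); in particular Tr(R Sᵀ R S) is real. -/
open Matrix

/-- The key trace computation in the proof of Lemma 2 of the paper: for real
symmetric `R, Σ` and real antisymmetric `Θ`, with `S = Σ + (i/2)Θ`,
`Tr(R Sᵀ R S) = Tr(RΣRΣ) + (1/4)Tr(RΘRΘ)`; in particular `Tr(R Sᵀ R S)` is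
real. -/
theorem trace_R_St_R_S_eq_real
    {n : ℕ} (hn : 1 ≤ n)
    (R Sgm Θ : Matrix (Fin n) (Fin n) ℝ)
    (hR : R.IsSymm) (hSgmSymm : Sgm.IsSymm) (hΘ : Θᵀ = -Θ) :
    ((R.map Complex.ofReal) *
        (Sgm.map Complex.ofReal + (Complex.I / 2) • Θ.map Complex.ofReal)ᵀ *
        (R.map Complex.ofReal) *
        (Sgm.map Complex.ofReal + (Complex.I / 2) • Θ.map Complex.ofReal)).trace
      = (((R * Sgm * R * Sgm).trace + (1 / 4) * (R * Θ * R * Θ).trace : ℝ) : ℂ) := by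
  set R' := R.map Complex.ofReal with hR'
  set Sg' := Sgm.map Complex.ofReal with hSg'
  set Θ' := Θ.map Complex.ofReal with hΘ'
  have hT : (Sg' + (Complex.I / 2) • Θ')ᵀ = Sg' - (Complex.I / 2) • Θ' := by
    rw [transpose_add, transpose_smul, hSg', hΘ', ← Matrix.transpose_map, ← Matrix.transpose_map,
      hSgmSymm.eq, hΘ]
    ext i j
    simp [sub_eq_add_neg]
  rw [hT]
  have hmap : ∀ A B : Matrix (Fin n) (Fin n) ℝ, (A * B).map Complex.ofReal
      = A.map Complex.ofReal * B.map Complex.ofReal := fun A B =>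
    Matrix.map_mul (f := Complex.ofRealHom)
  have htr : ∀ A : Matrix (Fin n) (Fin n) ℝ, (A.map Complex.ofReal).trace = (A.trace : ℂ) := by
    intro A
    simp [Matrix.trace, Matrix.diag, Complex.ofReal_sum]
  have hcyc : (R' * Sg' * R' * Θ').trace = (R' * Θ' * R' * Sg').trace := by
    rw [mul_assoc (R' * Sg'), mul_assoc (R' * Θ'), Matrix.trace_mul_comm]
  have expand : R' * (Sg' - (Complex.I / 2) • Θ') * R' * (Sg' + (Complex.I / 2) • Θ')
      = R' * Sg' * R' * Sg' + (Complex.I / 2) • (R' * Sg' * R' * Θ')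
        - (Complex.I / 2) • (R' * Θ' * R' * Sg')
        - ((Complex.I / 2) * (Complex.I / 2)) • (R' * Θ' * R' * Θ') := by
    simp only [Matrix.mul_sub, Matrix.mul_add, Matrix.sub_mul, Matrix.add_mul,
      Matrix.mul_smul, Matrix.smul_mul, smul_smul, smul_add, smul_sub]
    abel
  rw [expand]
  simp only [trace_add, trace_sub, trace_smul, hcyc]
  have : (Complex.I / 2) * (Complex.I / 2) = -(1/4 : ℂ) := by
    rw [div_mul_div_comm, Complex.I_mul_I]; norm_num
  rw [this]
  have h1 : (R' * Sg' * R' * Sg').trace = ((R * Sgm * R * Sgm).trace : ℂ) := by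
    rw [hR', hSg', ← hmap, ← hmap, ← hmap, htr]
  have h2 : (R' * Θ' * R' * Θ').trace = ((R * Θ * R * Θ).trace : ℂ) := by
    rw [hR', hΘ', ← hmap, ← hmap, ← hmap, htr]
  rw [h1, h2]
  simp only [smul_eq_mul]
  push_cast
  ring
end

section
/- Let n ≥ 1, Σ ∈ S_n, Θ ∈ A_n, and suppose the complex Hermitian matrix S := Σ + (i/2)Θ is positive definite. If R ∈ S_n is such that K(R) := ΣRΣ + ΘRΘ/4 is positive semi-definite, then R is positive semi-definite. Equivalently, the inverse operator K⁻¹ maps the cone of positive semi-definite real symmetric n×n matrices into itself. -/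
open Matrix ComplexOrder

/-!
Since `S = Σ + (i/2)Θ` is Hermitian, its transpose is its entrywise conjugate `Σ - (i/2)Θ`, again
positive definite, and a direct expansion gives `S R Sᵀ + Sᵀ R S = 2 K(R)`. It therefore suffices
that `X ↦ A X B + B X A`, for positive definite `A` and `B`, sends no Hermitian `X` outside the
positive cone into it. Conjugating by `√A` turns this into the same claim for the Lyapunov operator
`X ↦ X W + W X` with `W = √A⁻¹ B √A⁻¹` positive definite, and there it is immediate: on a unit
eigenvector `u` of `X` with eigenvalue `μ`, the quadratic form of `X W + W X` is `2 μ u⋆ W u`.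
-/

namespace Matrix

variable {ι : Type*}

lemma conjTranspose_map_ofReal {m : Type*} (M : Matrix m ι ℝ) :
    (M.map Complex.ofReal)ᴴ = Mᴴ.map Complex.ofReal :=
  (conjTranspose_map _ fun _ ↦ (Complex.conj_ofReal _).symm).symm

lemma IsHermitian.transpose_eq_map_star {α : Type*} [Star α] {A : Matrix ι ι α}
    (hA : A.IsHermitian) : Aᵀ = A.map star :=
  (congrArg Matrix.transpose hA.eq).symm.trans (conjTranspose_transpose A)

variable [Fintype ι]

open scoped MatrixOrder

lemma star_ofReal_dotProduct_map_ofReal_mulVec (M : Matrix ι ι ℝ) (x : ι → ℝ) :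
    star (Complex.ofReal ∘ x) ⬝ᵥ M.map Complex.ofReal *ᵥ (Complex.ofReal ∘ x) =
      ↑(star x ⬝ᵥ M *ᵥ x) := by
  simp only [dotProduct, mulVec, map_apply, Pi.star_apply, Function.comp_apply,
    Complex.star_def, Complex.conj_ofReal, star_trivial]
  push_cast
  rfl

lemma posSemidef_map_ofReal_iff [DecidableEq ι] {M : Matrix ι ι ℝ} :
    (M.map Complex.ofReal).PosSemidef ↔ M.PosSemidef := by
  constructor
  · intro h
    refine .of_dotProduct_mulVec_nonneg ?_ fun x ↦ ?_
    · refine map_injective Complex.ofReal_injective ?_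
      simpa [conjTranspose_map_ofReal] using h.isHermitian.eq
    · exact_mod_cast star_ofReal_dotProduct_map_ofReal_mulVec M x ▸ h.dotProduct_mulVec_nonneg _
  · intro h
    set X := CFC.sqrt M
    have hX : Xᴴ = X := (CFC.sqrt_nonneg M).isSelfAdjoint
    have hmap : (X * X).map Complex.ofReal = (X.map Complex.ofReal)ᴴ * X.map Complex.ofReal := by
      rw [conjTranspose_map_ofReal, hX]
      exact Matrix.map_mul (f := Complex.ofRealHom)
    rw [← CFC.sqrt_mul_sqrt_self M h.nonneg, hmap]
    exact posSemidef_conjTranspose_mul_self _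

variable {𝕜 : Type*} [RCLike 𝕜] [DecidableEq ι]

lemma PosSemidef.of_mul_add_mul_of_posDef {X W : Matrix ι ι 𝕜} (hX : X.IsHermitian)
    (hW : W.PosDef) (h : (X * W + W * X).PosSemidef) : X.PosSemidef := by
  refine hX.posSemidef_iff_eigenvalues_nonneg.mpr fun i ↦ ?_
  set u : ι → 𝕜 := ⇑(hX.eigenvectorBasis i)
  set μ : ℝ := hX.eigenvalues i
  have hXu : X *ᵥ u = μ • u := hX.mulVec_eigenvectorBasis i
  have huX : star u ᵥ* X = μ • star u := by
    rw [← hX.eq, ← star_mulVec, hXu, star_smul, star_trivial]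
  have hu : u ≠ 0 := fun h0 ↦
    hX.eigenvectorBasis.orthonormal.ne_zero i (by ext j; exact congrFun h0 j)
  have hquad : star u ⬝ᵥ (X * W + W * X) *ᵥ u = (2 * μ) • (star u ⬝ᵥ W *ᵥ u) := by
    rw [add_mulVec, dotProduct_add, ← mulVec_mulVec, ← mulVec_mulVec, dotProduct_mulVec, huX,
      hXu, mulVec_smul, smul_dotProduct, dotProduct_smul, ← add_smul, two_mul]
  have hW_pos := RCLike.pos_iff.mp (hW.dotProduct_mulVec_pos hu)
  have h_nonneg := (RCLike.nonneg_iff.mp (hquad ▸ h.dotProduct_mulVec_nonneg u)).1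
  rw [RCLike.smul_re] at h_nonneg
  show 0 ≤ μ
  linarith [nonneg_of_mul_nonneg_left h_nonneg hW_pos.1]

lemma PosSemidef.of_mul_mul_add_mul_mul_of_posDef {A B R : Matrix ι ι 𝕜} (hA : A.PosDef)
    (hB : B.PosDef) (hR : R.IsHermitian) (h : (A * R * B + B * R * A).PosSemidef) :
    R.PosSemidef := by
  set Q := CFC.sqrt A
  have hQA : Q * Q = A := CFC.sqrt_mul_sqrt_self A hA.posSemidef.nonneg
  have hQ : IsUnit Q := (CFC.isUnit_sqrt_iff A hA.posSemidef.nonneg).mpr hA.isUnit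
  have hQdet : IsUnit Q.det := (isUnit_iff_isUnit_det Q).mp hQ
  have hQstar : star Q = Q := (CFC.sqrt_nonneg A).isSelfAdjoint
  have hQinvstar : star Q⁻¹ = Q⁻¹ := by
    rw [star_eq_conjTranspose, conjTranspose_nonsing_inv, ← star_eq_conjTranspose, hQstar]
  rw [← hQ.posSemidef_star_left_conjugate_iff]
  refine .of_mul_add_mul_of_posDef (isHermitian_conjTranspose_mul_mul Q hR)
    ((isUnit_nonsing_inv_iff.mpr hQ).posDef_star_left_conjugate_iff.mpr hB) ?_
  convert h.conjTranspose_mul_mul_same Q⁻¹ using 1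
  rw [← hQA, ← star_eq_conjTranspose, hQinvstar, hQstar]
  simp only [mul_assoc, mul_add, add_mul, nonsing_inv_mul_cancel_left Q _ hQdet,
    mul_nonsing_inv_cancel_left Q _ hQdet, mul_nonsing_inv Q hQdet, mul_one]

end Matrix

lemma add_mul_mul_sub_add_sub_mul_mul_add {ι : Type*} [Fintype ι] (P T R : Matrix ι ι ℂ) :
    (P + (Complex.I / 2) • T) * R * (P - (Complex.I / 2) • T) +
        (P - (Complex.I / 2) • T) * R * (P + (Complex.I / 2) • T) =
      (2 : ℂ) • (P * R * P + (1 / 4 : ℂ) • (T * R * T)) := by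
  have hI : Complex.I / 2 * (Complex.I / 2) = -(1 / 4 : ℂ) := by
    rw [div_mul_div_comm, Complex.I_mul_I]; norm_num
  simp only [add_mul, mul_add, sub_mul, mul_sub, Matrix.smul_mul, Matrix.mul_smul, smul_smul, hI]
  module

theorem Kinv_maps_psd_cone_into_itself_general
    {n : ℕ}
    (Sgm Θ : Matrix (Fin n) (Fin n) ℝ)
    (hS : (Sgm.map (Complex.ofReal) +
      (Complex.I / 2) • Θ.map (Complex.ofReal)).PosDef)
    (R : Matrix (Fin n) (Fin n) ℝ) (hR : R.IsSymm)
    (hKR : (Sgm * R * Sgm + (1 / 4 : ℝ) • (Θ * R * Θ)).PosSemidef) :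
    R.PosSemidef := by
  set S := Sgm.map Complex.ofReal + (Complex.I / 2) • Θ.map Complex.ofReal
  have hST : Sᵀ = Sgm.map Complex.ofReal - (Complex.I / 2) • Θ.map Complex.ofReal := by
    rw [hS.isHermitian.transpose_eq_map_star]
    ext i j
    simp [S, Complex.conj_ofReal, sub_eq_add_neg, map_ofNat, neg_div]
  have hK : S * R.map Complex.ofReal * Sᵀ + Sᵀ * R.map Complex.ofReal * S =
      (2 : ℂ) • (Sgm * R * Sgm + (1 / 4 : ℝ) • (Θ * R * Θ)).map Complex.ofReal := by
    rw [hST, add_mul_mul_sub_add_sub_mul_mul_add]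
    congr 1
    ext i j
    simp only [Matrix.map_apply, Matrix.add_apply, Matrix.smul_apply, Matrix.mul_apply, smul_eq_mul]
    push_cast
    ring
  have hRc : (R.map Complex.ofReal).IsHermitian := by
    rw [IsHermitian, conjTranspose_map_ofReal, conjTranspose_eq_transpose_of_trivial, hR]
  refine posSemidef_map_ofReal_iff.mp (.of_mul_mul_add_mul_mul_of_posDef hS hS.transpose hRc ?_)
  rw [hK]
  exact (posSemidef_map_ofReal_iff.mpr hKR).smul (by norm_num)

/-- Appendix D of the paper: positiveness of `K⁻¹` with respect to the cone of
positive semidefinite matrices.  If `S = Σ + (i/2)Θ` is positive definite and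
`R` is a real symmetric matrix such that `K(R) = ΣRΣ + ΘRΘ/4` is positive
semidefinite, then `R` itself is positive semidefinite; equivalently,
`K⁻¹(S_n⁺) ⊆ S_n⁺`. -/
theorem Kinv_maps_psd_cone_into_itself
    {n : ℕ} (hn : 1 ≤ n)
    (Sgm Θ : Matrix (Fin n) (Fin n) ℝ)
    (hSgmSymm : Sgm.IsSymm) (hΘ : Θᵀ = -Θ)
    (hS : (Sgm.map (Complex.ofReal) +
      (Complex.I / 2) • Θ.map (Complex.ofReal)).PosDef)
    (R : Matrix (Fin n) (Fin n) ℝ) (hR : R.IsSymm)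
    (hKR : (Sgm * R * Sgm + (1 / 4 : ℝ) • (Θ * R * Θ)).PosSemidef) :
    R.PosSemidef :=
  Kinv_maps_psd_cone_into_itself_general Sgm Θ hS R hR hKR
end

section
/- Let n, m ≥ 1, let Θ be an invertible real antisymmetric n×n matrix, R a real symmetric n×n matrix, B a real n×m matrix, and J a real antisymmetric m×m matrix. Define A := ΘR − (1/2)·B J Bᵀ Θ⁻¹. Then A Θ + Θ Aᵀ + B J Bᵀ = 0. -/
open Matrix

/-- Physical realizability (equation (29) of the paper): the drift matrix
`A = ΘR − (1/2)BJBᵀΘ⁻¹` of the linearized dynamics satisfies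
`AΘ + ΘAᵀ + BJBᵀ = 0`, for `Θ` invertible real antisymmetric, `R` real
symmetric, and `J` real antisymmetric. -/
theorem physical_realizability_identity
    {n m : ℕ} (hn : 1 ≤ n) (hm : 1 ≤ m)
    (Θ : Matrix (Fin n) (Fin n) ℝ) (hΘ : Θᵀ = -Θ) (hΘinv : IsUnit Θ.det)
    (R : Matrix (Fin n) (Fin n) ℝ) (hR : R.IsSymm)
    (B : Matrix (Fin n) (Fin m) ℝ)
    (J : Matrix (Fin m) (Fin m) ℝ) (hJ : Jᵀ = -J) :
    (Θ * R - (1 / 2 : ℝ) • (B * J * Bᵀ * Θ⁻¹)) * Θ +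
      Θ * (Θ * R - (1 / 2 : ℝ) • (B * J * Bᵀ * Θ⁻¹))ᵀ + B * J * Bᵀ = 0 := by
  have hinv : Θ⁻¹ * Θ = 1 := nonsing_inv_mul Θ hΘinv
  have hinv2 : Θ * Θ⁻¹ = 1 := mul_nonsing_inv Θ hΘinv
  have hΘinvT : (Θ⁻¹)ᵀ = -Θ⁻¹ := by
    rw [transpose_nonsing_inv, hΘ]
    rw [Matrix.inv_eq_left_inv (by rw [Matrix.neg_mul, Matrix.mul_neg, neg_neg, hinv])]
  have hRs : Rᵀ = R := hR
  simp only [transpose_sub, transpose_smul, transpose_mul, hΘ, hJ, hΘinvT, hRs,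
    transpose_transpose]
  rw [sub_mul, mul_sub]
  simp only [Matrix.smul_mul, Matrix.mul_smul, Matrix.mul_assoc, hinv, Matrix.mul_one]
  simp only [Matrix.mul_neg, Matrix.neg_mul, neg_neg, ← Matrix.mul_assoc, hinv2,
    Matrix.one_mul]
  module
end

section
/- Let ω₀, φ, f, c₁₁, c₁₂, c₂₂ be real numbers with f > 0, φ > 0, c₁₁ > 0, c₂₂ > 0 and c₁₁ c₂₂ > c₁₂². Then there exists exactly one triple (σ₁₁, σ₁₂, σ₂₂) of real numbers with σ₁₁ > 0 satisfying the three equations 2σ₁₂ − φσ₁₁ + c₁₁ = 0, −ω₀²σ₁₁ − φσ₁₂ + σ₂₂ + c₁₂ − 12 f σ₁₁² = 0, and −2ω₀²σ₁₂ − φσ₂₂ + c₂₂ − 24 f σ₁₁ σ₁₂ = 0. -/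
/-- Section 6 of the paper: for the quantum Duffing oscillator with `f > 0`,
`φ > 0` and positive definite diffusion matrix `C`, there is exactly one
triple `(σ₁₁, σ₁₂, σ₂₂)` with `σ₁₁ > 0` solving the steady-state equations. -/
theorem duffing_unique_admissible_steady_state
    (ω₀ φ f c₁₁ c₁₂ c₂₂ : ℝ)
    (hf : 0 < f) (hφ : 0 < φ)
    (h11 : 0 < c₁₁) (h22 : 0 < c₂₂) (hdet : c₁₂ ^ 2 < c₁₁ * c₂₂) :
    ∃! s : ℝ × ℝ × ℝ,
      0 < s.1 ∧
      2 * s.2.1 - φ * s.1 + c₁₁ = 0 ∧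
      -ω₀ ^ 2 * s.1 - φ * s.2.1 + s.2.2 + c₁₂ - 12 * f * s.1 ^ 2 = 0 ∧
      -2 * ω₀ ^ 2 * s.2.1 - φ * s.2.2 + c₂₂ - 24 * f * s.1 * s.2.1 = 0 := by
  obtain ⟨A, B, D, hAdef, hBdef, hDdef⟩ :
      ∃ A B D : ℝ, A = 24 * f * φ ∧ B = 12 * f * c₁₁ - 2 * ω₀ ^ 2 * φ - φ ^ 3 / 2 ∧
        D = ω₀ ^ 2 * c₁₁ + φ ^ 2 * c₁₁ / 2 + φ * c₁₂ + c₂₂ := ⟨_, _, _, rfl, rfl, rfl⟩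
  have hA : 0 < A := by rw [hAdef]; positivity
  have hD : 0 < D := by
    rw [hDdef]
    have key : 0 < c₁₁ * (ω₀ ^ 2 * c₁₁ + φ ^ 2 * c₁₁ / 2 + φ * c₁₂ + c₂₂) := by
      nlinarith [sq_nonneg (φ * c₁₁ + c₁₂), sq_nonneg (ω₀ * c₁₁), sq_nonneg c₁₂]
    rcases mul_pos_iff.1 key with ⟨_, h⟩ | ⟨h, _⟩
    · exact h
    · linarith
  obtain ⟨x, hx, hxq⟩ : ∃ x : ℝ, 0 < x ∧ A * x ^ 2 - B * x - D = 0 := by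
    have hdisc : (0:ℝ) ≤ B ^ 2 + 4 * A * D := by nlinarith [sq_nonneg B]
    set r : ℝ := Real.sqrt (B ^ 2 + 4 * A * D) with hrdef
    have hr2 : r ^ 2 = B ^ 2 + 4 * A * D := Real.sq_sqrt hdisc
    have hr0 : 0 ≤ r := Real.sqrt_nonneg _
    have hrB : -B < r := by nlinarith [mul_pos hA hD]
    refine ⟨(B + r) / (2 * A), div_pos (by linarith) (by linarith), ?_⟩
    have key : 2 * A * ((B + r) / (2 * A)) = B + r := by
      field_simp
    have h4 : 4 * A * (A * ((B + r) / (2 * A)) ^ 2 - B * ((B + r) / (2 * A)) - D) = 0 := by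
      linear_combination (2 * A * ((B + r) / (2 * A)) - B + r) * key + hr2
    have h4A : (4 * A) ≠ 0 := by positivity
    exact (mul_eq_zero.1 h4).resolve_left h4A
  set p : ℝ := (φ * x - c₁₁) / 2 with hpdef
  set q : ℝ := ω₀ ^ 2 * x + φ * p - c₁₂ + 12 * f * x ^ 2 with hqdef
  refine ⟨(x, p, q), ⟨hx, by rw [hpdef]; ring, by rw [hqdef]; ring, ?_⟩, ?_⟩
  · show -2 * ω₀ ^ 2 * p - φ * q + c₂₂ - 24 * f * x * p = 0
    rw [hqdef, hpdef]
    rw [hAdef, hBdef, hDdef] at hxq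
    linear_combination -hxq
  · rintro ⟨y, u, v⟩ ⟨hy, e1, e2, e3⟩
    simp only at hy e1 e2 e3 ⊢
    have hyq : A * y ^ 2 - B * y - D = 0 := by
      rw [hAdef, hBdef, hDdef]
      linear_combination (-1) * e3 - φ * e2 - (ω₀ ^ 2 + φ ^ 2 / 2 + 12 * f * y) * e1
    have hyx : y = x := by
      have hfac : (y - x) * (A * (y + x) - B) = 0 := by linear_combination hyq - hxq
      rcases mul_eq_zero.1 hfac with h | h
      · linarith
      · exfalso
        nlinarith [mul_pos hA (mul_pos hx hy)]
    have hu : u = p := by rw [hpdef, ← hyx]; linarith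
    have hv : v = q := by rw [hqdef, hpdef, ← hyx, ← hu] at *; linarith
    exact Prod.ext hyx (Prod.ext hu hv)
end
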